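/- arXiv:2007.05375 — 2 statements merged into one kernel-verified Lean document; each statement's English description precedes it below -/
import Mathlib

section
/- Let O be the octonions and f : O → O a real-linear map. If Re(f(px) - p·f(x)) = 0 for all p, x in O, then f(x) = f₀(x) - Σ_{i=1}^{7} e_i f₀(e_i x), where f₀(x) := Re(f(x)) and e_1,…,e_7 is the standard imaginary unit basis of O. -/
/-! Left multiplication by an imaginary unit moves a coordinate into the real part:
`Re (eᵢ y) = -yᵢ`, so every octonion satisfies `y = Re y - ∑ᵢ Re (eᵢ y) eᵢ`. For `y = f x` the
hypothesis replaces `Re (eᵢ f x)` by `Re (f (eᵢ x))`. -/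

noncomputable section

open scoped Quaternion

/-- The octonions, built from pairs of quaternions via the Cayley–Dickson construction. -/
def Octonion : Type := ℍ[ℝ] × ℍ[ℝ]

namespace Octonion

def mk' (a b : ℍ[ℝ]) : Octonion := Prod.mk a b
def q1 (x : Octonion) : ℍ[ℝ] := Prod.fst x
def q2 (x : Octonion) : ℍ[ℝ] := Prod.snd x

instance : AddCommGroup Octonion := inferInstanceAs (AddCommGroup (ℍ[ℝ] × ℍ[ℝ]))
instance : Module ℝ Octonion := inferInstanceAs (Module ℝ (ℍ[ℝ] × ℍ[ℝ]))
instance : One Octonion := ⟨mk' 1 0⟩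
instance : Mul Octonion :=
  ⟨fun x y => mk' (q1 x * q1 y - star (q2 y) * q2 x) (q2 y * q1 x + q2 x * star (q1 y))⟩

/-- Octonion conjugation. -/
def conj (x : Octonion) : Octonion := mk' (star (q1 x)) (-(q2 x))

/-- The real part of an octonion. -/
def re (x : Octonion) : ℝ := (q1 x).re

/-- The standard basis `e 0 = 1, e 1, …, e 7` of the octonions. -/
def e : Fin 8 → Octonion :=
  ![mk' 1 0, mk' ⟨0,1,0,0⟩ 0, mk' ⟨0,0,1,0⟩ 0, mk' ⟨0,0,0,1⟩ 0,
    mk' 0 1, mk' 0 ⟨0,1,0,0⟩, mk' 0 ⟨0,0,1,0⟩, mk' 0 ⟨0,0,0,1⟩]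

/-- The coordinates of an octonion with respect to the standard basis. -/
def coord (x : Octonion) : Fin 8 → ℝ :=
  ![(q1 x).re, (q1 x).imI, (q1 x).imJ, (q1 x).imK,
    (q2 x).re, (q2 x).imI, (q2 x).imJ, (q2 x).imK]

end Octonion

namespace Octonion

lemma re_sub (x y : Octonion) : re (x - y) = re x - re y := rfl

lemma ext_iff {x y : Octonion} : x = y ↔ q1 x = q1 y ∧ q2 x = q2 y := Prod.ext_iff

lemma mul_def (x y : Octonion) :
    x * y = mk' (q1 x * q1 y - star (q2 y) * q2 x) (q2 y * q1 x + q2 x * star (q1 y)) := rfl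

@[simp] lemma q1_mk' (a b : ℍ[ℝ]) : q1 (mk' a b) = a := rfl
@[simp] lemma q2_mk' (a b : ℍ[ℝ]) : q2 (mk' a b) = b := rfl
@[simp] lemma q1_add (x y : Octonion) : q1 (x + y) = q1 x + q1 y := rfl
@[simp] lemma q2_add (x y : Octonion) : q2 (x + y) = q2 x + q2 y := rfl
@[simp] lemma q1_smul (r : ℝ) (x : Octonion) : q1 (r • x) = r • q1 x := rfl
@[simp] lemma q2_smul (r : ℝ) (x : Octonion) : q2 (r • x) = r • q2 x := rfl

lemma re_e_succ_mul (i : Fin 7) (x : Octonion) : re (e i.succ * x) = -coord x i.succ := by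
  -- The literals in `e` have type `QuaternionAlgebra ℝ (-1) 0 (-1)`, only defeq to `ℍ[ℝ]`, so
  -- `q1_mk'` does not fire on them and `q1`, `q2`, `mk'` are unfolded instead.
  fin_cases i <;> simp [re, coord, e, mul_def, Quaternion.re_mul] <;> simp [q1, q2, mk']

lemma sum_coord_smul_e (x : Octonion) : ∑ j, coord x j • e j = x := by
  rw [ext_iff, Fin.sum_univ_eight]
  constructor <;> ext <;> simp [coord, e] <;> simp [q1, q2, mk']

lemma eq_re_smul_one_sub_sum (x : Octonion) :
    x = re x • (1 : Octonion) - ∑ i : Fin 7, re (e i.succ * x) • e i.succ := by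
  simp only [re_e_succ_mul, neg_smul, Finset.sum_neg_distrib, sub_neg_eq_add]
  conv_lhs => rw [← sum_coord_smul_e x, Fin.sum_univ_succ]
  rfl

end Octonion

open Octonion in
/-- If an `ℝ`-linear map `f : 𝕆 → 𝕆` satisfies `Re (f (p x) - p f x) = 0` for all
`p, x`, then `f x = f₀(x) - ∑ᵢ eᵢ f₀(eᵢ x)` where `f₀ = Re ∘ f`. -/
theorem octonion_almost_linear_real_part_formula
    (f : Octonion →ₗ[ℝ] Octonion)
    (h : ∀ p x : Octonion, re (f (p * x) - p * f x) = 0) :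
    ∀ x : Octonion,
      f x = re (f x) • (1 : Octonion)
        - ∑ i : Fin 7, re (f (e i.succ * x)) • e i.succ := by
  intro x
  have re_f_mul (p : Octonion) : re (f (p * x)) = re (p * f x) := by
    simpa [re_sub, sub_eq_zero] using h p x
  simp only [re_f_mul]
  exact eq_re_smul_one_sub_sum (f x)
end
end

section
/- Let f : O → O be a real-linear map on the octonions satisfying f(xq) = q f(x) for all q, x ∈ O. Then f = 0. -/
noncomputable section

open scoped Quaternion

/-!
Evaluating the hypothesis at `x = 1` gives `f q = q * c` with `c = f 1`, so `c` satisfies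
`(x * q) * c = q * (x * c)` for all `x, q`. Take `x = ℓ = (0, 1)` and `q = (u, 0)` with `u`
quaternionic: by the Cayley–Dickson formula, both halves `p` of `c` (conjugated) then satisfy
`u * p = p * star u` for every quaternion `u`. For `u` an imaginary unit this says `u` anticommutes
with `p`, which forces every coordinate of `p` to vanish.
-/

namespace QuaternionAlgebra

variable {R : Type*} [CommRing R] [NoZeroDivisors R] [CharZero R] {c₁ c₃ : R}

theorem eq_zero_of_forall_mul_eq_mul_star (hc₁ : c₁ ≠ 0) (hc₃ : c₃ ≠ 0) {p : ℍ[R,c₁,c₃]}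
    (hp : ∀ u : ℍ[R,c₁,c₃], u * p = p * star u) : p = 0 := by
  have hi := hp ⟨0, 1, 0, 0⟩
  have hj := hp ⟨0, 0, 1, 0⟩
  have hk := hp ⟨0, 0, 0, 1⟩
  simp only [QuaternionAlgebra.ext_iff, star_mk, re_mul, imI_mul, imJ_mul, imK_mul, mul_zero,
    zero_mul, mul_one, one_mul, mul_neg, add_zero, zero_add, sub_zero, zero_sub, sub_self,
    sub_neg_eq_add, neg_zero, and_true, true_and, and_self, self_eq_neg, neg_eq_self, mul_eq_zero,
    hc₁, hc₃, false_or] at hi hj hk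
  ext <;> simp [hi, hj, hk]

end QuaternionAlgebra

theorem Quaternion.eq_zero_of_forall_mul_eq_mul_star {R : Type*} [CommRing R] [NoZeroDivisors R]
    [CharZero R] {p : ℍ[R]} (hp : ∀ u : ℍ[R], u * p = p * star u) : p = 0 :=
  QuaternionAlgebra.eq_zero_of_forall_mul_eq_mul_star (neg_ne_zero.2 one_ne_zero)
    (neg_ne_zero.2 one_ne_zero) hp

namespace Octonion

@[simp] lemma q1_mul (x y : Octonion) : q1 (x * y) = q1 x * q1 y - star (q2 y) * q2 x := rfl
@[simp] lemma q2_mul (x y : Octonion) : q2 (x * y) = q2 y * q1 x + q2 x * star (q1 y) := rfl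
@[simp] lemma q1_one : q1 1 = 1 := rfl
@[simp] lemma q2_one : q2 1 = 0 := rfl
@[simp] lemma q1_zero : q1 0 = 0 := rfl
@[simp] lemma q2_zero : q2 0 = 0 := rfl

protected lemma one_mul (x : Octonion) : 1 * x = x := by
  simp [ext_iff]

protected lemma mul_zero (x : Octonion) : x * 0 = 0 := by
  simp [ext_iff]

theorem eq_zero_of_forall_mul_mul_eq_mul_mul {c : Octonion}
    (hc : ∀ q x : Octonion, x * q * c = q * (x * c)) : c = 0 := by
  have hℓ (u : ℍ[ℝ]) := hc (mk' u 0) (mk' 0 1)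
  have h₁ : star (q1 c) = 0 := Quaternion.eq_zero_of_forall_mul_eq_mul_star fun u => by
    simpa using congrArg q2 (hℓ (star u))
  have h₂ : star (q2 c) = 0 := Quaternion.eq_zero_of_forall_mul_eq_mul_star fun u => by
    simpa using (congrArg q1 (hℓ u)).symm
  exact ext_iff.2 ⟨star_eq_zero.1 h₁, star_eq_zero.1 h₂⟩

end Octonion

open Octonion in
/-- An `ℝ`-linear map `f : 𝕆 → 𝕆` with `f (x q) = q f(x)` for all `q, x` is zero. -/
theorem octonion_twisted_right_equivariant_map_eq_zero
    (f : Octonion →ₗ[ℝ] Octonion)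
    (h : ∀ q x : Octonion, f (x * q) = q * f x) :
    f = 0 := by
  have hf (q : Octonion) : f q = q * f 1 := by simpa [Octonion.one_mul] using h q 1
  have hf1 : f 1 = 0 := eq_zero_of_forall_mul_mul_eq_mul_mul fun q x => by rw [← hf, ← hf, h]
  exact LinearMap.ext fun x => by rw [hf, hf1, Octonion.mul_zero, LinearMap.zero_apply]
end
end
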